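/- arXiv:0804.0704 — 2 statements merged into one kernel-verified Lean document; each statement's English description precedes it below -/
import Mathlib

section
/- Let (W,S) be a Coxeter system indexed by I and let {α,β} be a spherical 2-partition of I that is admissible, meaning: for every w in the subgroup generated by r_α and r_β and every γ ∈ {α,β}, either γ ⊆ I^+(w) or γ ⊆ I^-(w). Then every element w of ⟨r_α, r_β⟩ admits a compatible representation on {α,β}, i.e. w = r_{α_1}···r_{α_n} with each α_k ∈ {α,β} and ℓ(w) = Σ_{k=1}^n ℓ(r_{α_k}). -/
/-- `α` is spherical: the standard parabolic subgroup it generates is finite. -/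
def IsSpherical {B W : Type*} [Group W] {M : CoxeterMatrix B} (cs : CoxeterSystem M W)
    (α : Set B) : Prop :=
  Set.Finite ((Subgroup.closure (cs.simple '' α) : Subgroup W) : Set W)

/-- `x` is the longest element of the standard parabolic subgroup generated by `α`. -/
def IsLongestOf {B W : Type*} [Group W] {M : CoxeterMatrix B} (cs : CoxeterSystem M W)
    (α : Set B) (x : W) : Prop :=
  x ∈ Subgroup.closure (cs.simple '' α) ∧
  (∀ u ∈ Subgroup.closure (cs.simple '' α), cs.length u ≤ cs.length x) ∧
  (∀ u ∈ Subgroup.closure (cs.simple '' α), cs.length u = cs.length x → u = x)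

/-!
Induct on `ℓ w`. A nontrivial `w` has a right descent `s i`, and `i` lies in `γ ∈ {α, β}`;
admissibility then makes every `s j` with `j ∈ γ` a right descent of `w`. For such `w`,
`ℓ w = ℓ (w y) + ℓ y` for every `y ∈ W_γ`, by induction along a reduced `γ`-word `i :: ω` of `y`:
the exchange condition for the descent `s i` of `w = (w π ω) (π ω)⁻¹` cannot delete a letter of
`(π ω)⁻¹`, as `i :: ω` is reduced, so it shortens `w π ω`. Taking `y = r_γ⁻¹` splits off `r_γ`
additively.

The exchange condition comes from Tits' sign representation of `W` on `W × ZMod 2`. Its second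
coordinate counts, mod 2, the occurrences of `t` in the right inversion sequence of a word for `w`,
so this parity depends only on `w`; comparing `w` with `w t` shows that every right inversion `t`
of `π ω` occurs in the right inversion sequence of `ω`, and deleting that letter gives `π ω * t`.
-/

namespace CoxeterSystem

variable {B W : Type*} [Group W] {M : CoxeterMatrix B} (cs : CoxeterSystem M W)

local prefix:100 "s" => cs.simple
local prefix:100 "π" => cs.wordProd
local prefix:100 "ℓ" => cs.length
local prefix:100 "ris" => cs.rightInvSeq

theorem conj_simple_eq_iff (i : B) (t c : W) : s i * t * s i = c ↔ t = s i * c * s i := by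
  constructor <;> rintro rfl <;> simp [mul_assoc]

section ReflectionParity

attribute [local instance] Classical.propDecidable

noncomputable def reflPerm (i : B) : Equiv.Perm (W × ZMod 2) :=
  Function.Involutive.toPerm (fun p => (s i * p.1 * s i, p.2 + if p.1 = s i then 1 else 0))
    fun ⟨t, ε⟩ => by
      simp only [conj_simple_eq_iff, simple_mul_simple_self, one_mul,
        add_assoc, CharTwo.add_self_eq_zero, add_zero, Prod.mk.injEq, and_true]

theorem reflPerm_apply (i : B) (t : W) (ε : ZMod 2) :
    reflPerm cs i (t, ε) = (s i * t * s i, ε + if t = s i then 1 else 0) := rfl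

theorem reflPerm_mul_pow_apply (i j : B) (k : ℕ) (t : W) (ε : ZMod 2) :
    ((reflPerm cs i * reflPerm cs j) ^ k) (t, ε) =
      ((s i * s j) ^ k * t * (s j * s i) ^ k,
        ε + ∑ l ∈ Finset.range (2 * k), if t = (s j * s i) ^ l * s j then 1 else 0) := by
  induction k with
  | zero => simp
  | succ k ih =>
    have h₁ : (s j * s i) ^ k * s j * (s i * s j) ^ k = (s j * s i) ^ (2 * k) * s j := by
      rw [mul_assoc, ← mul_pow_mul, two_mul, pow_add, mul_assoc]
    have h₂ : (s j * s i) ^ k * (s j * s i * s j) * (s i * s j) ^ k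
        = (s j * s i) ^ (2 * k + 1) * s j := by
      rw [show 2 * k + 1 = k + 1 + k by ring, pow_add, pow_succ]
      simp only [mul_assoc]
      rw [← mul_pow_mul]
    rw [pow_succ', Equiv.Perm.mul_apply, Equiv.Perm.mul_apply, ih, reflPerm_apply,
      reflPerm_apply, Prod.mk.injEq]
    constructor
    · rw [pow_succ' (s i * s j), pow_succ (s j * s i)]
      simp only [mul_assoc]
    · have hconj : ∀ c, (s i * s j) ^ k * t * (s j * s i) ^ k = c ↔
          t = (s j * s i) ^ k * c * (s i * s j) ^ k := by
        have hinv : (s j * s i) ^ k = ((s i * s j) ^ k)⁻¹ := by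
          rw [← inv_pow, mul_inv_rev, inv_simple, inv_simple]
        intro c
        rw [hinv]
        constructor <;> rintro rfl <;> simp [mul_assoc]
      simp only [conj_simple_eq_iff, hconj, h₁, h₂]
      rw [show 2 * (k + 1) = 2 * k + 1 + 1 by ring, Finset.sum_range_succ, Finset.sum_range_succ]
      abel

theorem isLiftable_reflPerm : M.IsLiftable (reflPerm cs) := by
  intro i j
  refine Equiv.ext fun ⟨t, ε⟩ => ?_
  have hperiod : ∀ l, (s j * s i) ^ (M i j + l) = (s j * s i) ^ l := by
    simp [pow_add]
  rw [reflPerm_mul_pow_apply, simple_mul_simple_pow, simple_mul_simple_pow', two_mul,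
    Finset.sum_range_add]
  simp [hperiod, CharTwo.add_self_eq_zero]

noncomputable def signRep : W →* Equiv.Perm (W × ZMod 2) :=
  cs.lift ⟨reflPerm cs, isLiftable_reflPerm cs⟩

theorem signRep_wordProd (ω : List B) (t : W) (ε : ZMod 2) :
    signRep cs (π ω) (t, ε) = (π ω * t * (π ω)⁻¹, ε + (ris ω).count t) := by
  induction ω generalizing t ε with
  | nil => simp
  | cons i ω ih =>
    have hcond : π ω * t * (π ω)⁻¹ = s i ↔ (π ω)⁻¹ * s i * π ω = t := by
      rw [← MulAut.conj_apply, ← MulEquiv.eq_symm_apply, MulAut.conj_symm_apply, eq_comm]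
    rw [wordProd_cons, map_mul, Equiv.Perm.mul_apply, ih, signRep, lift_apply_simple,
      reflPerm_apply, rightInvSeq, List.count_cons, hcond]
    simp [mul_assoc, inv_simple, add_assoc]

noncomputable def inversionParity (w t : W) : ZMod 2 := (signRep cs w (t, 0)).2

theorem inversionParity_wordProd (ω : List B) (t : W) :
    inversionParity cs (π ω) t = (ris ω).count t := by
  simp [inversionParity, signRep_wordProd]

theorem signRep_apply (w t : W) (ε : ZMod 2) :
    signRep cs w (t, ε) = (w * t * w⁻¹, ε + inversionParity cs w t) := by
  obtain ⟨ω, rfl⟩ := cs.wordProd_surjective w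
  rw [signRep_wordProd, inversionParity_wordProd]

theorem inversionParity_mul (u v t : W) :
    inversionParity cs (u * v) t = inversionParity cs v t + inversionParity cs u (v * t * v⁻¹) := by
  change (signRep cs (u * v) (t, 0)).2 = _
  rw [map_mul, Equiv.Perm.mul_apply, signRep_apply cs v, signRep_apply cs u, zero_add]

theorem inversionParity_one (t : W) : inversionParity cs 1 t = 0 := by
  simp [inversionParity]

theorem IsReflection.inversionParity_self {t : W} (ht : cs.IsReflection t) :
    inversionParity cs t t = 1 := by
  obtain ⟨x, k, rfl⟩ := ht
  have hinv : inversionParity cs x⁻¹ (x * (s k * x⁻¹)) + inversionParity cs x (s k) = 0 := by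
    simpa [inversionParity_one, mul_assoc] using (inversionParity_mul cs x x⁻¹ (x * s k * x⁻¹)).symm
  have hsimple : inversionParity cs (s k) (s k) = 1 := by
    simp [inversionParity, signRep, reflPerm_apply]
  conv_lhs => rw [mul_assoc, inversionParity_mul, inversionParity_mul]
  simp only [mul_inv_rev, inv_inv, inv_simple, mul_assoc, inv_mul_cancel_left,
    simple_mul_simple_cancel_left, inv_mul_cancel, mul_one, hsimple]
  linear_combination hinv

theorem mem_rightInvSeq_of_isRightInversion {ω : List B} {t : W}
    (ht : cs.IsRightInversion (π ω) t) : t ∈ ris ω := by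
  by_contra hmem
  -- the parities of `t` for `π ω` and `π ω * t` differ by that of `t` for itself, which is `1`
  obtain ⟨σ, hσ, hσω⟩ := cs.exists_isReduced (π ω * t)
  have hparity : inversionParity cs (π ω * t) t = 1 := by
    have h := inversionParity_mul cs (π ω * t) t t
    rw [mul_assoc, ht.1.mul_self, mul_one, one_mul, ht.1.inv,
      ht.1.inversionParity_self, inversionParity_wordProd, List.count_eq_zero_of_not_mem hmem,
      Nat.cast_zero, eq_comm, CharTwo.add_eq_zero] at h
    exact h.symm
  rw [hσω, inversionParity_wordProd] at hparity
  have hmemσ : t ∈ ris σ :=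
    List.count_pos_iff.mp (Nat.pos_of_ne_zero fun h => by simp [h] at hparity)
  have hlt := (cs.isRightInversion_of_mem_rightInvSeq hσ hmemσ).2
  rw [← hσω, mul_assoc, ht.1.mul_self, mul_one] at hlt
  exact lt_asymm ht.2 hlt

end ReflectionParity

theorem exists_eraseIdx_of_isRightInversion {ω : List B} {t : W}
    (ht : cs.IsRightInversion (π ω) t) : ∃ j < ω.length, π ω * t = π (ω.eraseIdx j) := by
  obtain ⟨j, hj, rfl⟩ := List.mem_iff_getElem.mp (mem_rightInvSeq_of_isRightInversion cs ht)
  refine ⟨j, by simpa using hj, ?_⟩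
  rw [← List.getD_eq_getElem _ 1 hj, wordProd_mul_getD_rightInvSeq]

theorem exists_isReduced_wordProd_mul_simple {γ : Set B} {ω : List B} (hω : cs.IsReduced ω)
    (hωγ : ∀ j ∈ ω, j ∈ γ) {i : B} (hi : i ∈ γ) :
    ∃ ω' : List B, cs.IsReduced ω' ∧ (∀ j ∈ ω', j ∈ γ) ∧ π ω * s i = π ω' := by
  rcases cs.length_mul_simple (π ω) i with hup | hdown
  · refine ⟨ω.concat i, ?_, by simpa [or_imp, forall_and] using ⟨hωγ, hi⟩,
      (cs.wordProd_concat i ω).symm⟩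
    rw [IsReduced, wordProd_concat, hup, hω.eq, List.length_concat]
  · have hdesc : cs.IsRightInversion (π ω) (s i) := ⟨cs.isReflection_simple i, by omega⟩
    obtain ⟨j, hj, hexch⟩ := exists_eraseIdx_of_isRightInversion cs hdesc
    refine ⟨ω.eraseIdx j, ?_, fun k hk => hωγ k (List.mem_of_mem_eraseIdx hk), hexch⟩
    rw [IsReduced, ← hexch, List.length_eraseIdx_of_lt hj, ← hω.eq]
    omega

theorem exists_isReduced_of_mem_closure {γ : Set B} {y : W}
    (hy : y ∈ Subgroup.closure (cs.simple '' γ)) :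
    ∃ ω : List B, cs.IsReduced ω ∧ (∀ j ∈ ω, j ∈ γ) ∧ y = π ω := by
  induction hy using Subgroup.closure_induction_right with
  | one => exact ⟨[], by simp [IsReduced], by simp, by simp⟩
  | mul_right y _ x hx ih =>
    obtain ⟨i, hi, rfl⟩ := hx
    obtain ⟨ω, hω, hωγ, rfl⟩ := ih
    exact exists_isReduced_wordProd_mul_simple cs hω hωγ hi
  | mul_inv_cancel y _ x hx ih =>
    obtain ⟨i, hi, rfl⟩ := hx
    obtain ⟨ω, hω, hωγ, rfl⟩ := ih
    rw [inv_simple]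
    exact exists_isReduced_wordProd_mul_simple cs hω hωγ hi

theorem isRightDescent_or_exists_of_isRightDescent_mul {a b : W} {i : B}
    (hi : cs.IsRightDescent (a * b) i) :
    cs.IsRightDescent b i ∨ ∃ a', a * b * s i = a' * b ∧ ℓ a' < ℓ a := by
  obtain ⟨ωa, hωa, rfl⟩ := cs.exists_isReduced a
  obtain ⟨ωb, hωb, rfl⟩ := cs.exists_isReduced b
  have hinv : cs.IsRightInversion (π (ωa ++ ωb)) (s i) := by
    rwa [isRightInversion_simple_iff_isRightDescent, wordProd_append]
  obtain ⟨j, hj, hexch⟩ := exists_eraseIdx_of_isRightInversion cs hinv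
  rw [wordProd_append] at hexch
  rcases lt_or_ge j ωa.length with hja | hja
  · rw [List.eraseIdx_append_of_lt_length hja, wordProd_append] at hexch
    refine .inr ⟨π (ωa.eraseIdx j), hexch, ?_⟩
    calc ℓ (π (ωa.eraseIdx j)) ≤ (ωa.eraseIdx j).length := cs.length_wordProd_le _
      _ < ωa.length := by rw [List.length_eraseIdx_of_lt hja]; omega
      _ = ℓ (π ωa) := hωa.symm
  · rw [List.eraseIdx_append_of_length_le hja, wordProd_append, mul_assoc] at hexch
    refine .inl ?_
    rw [IsRightDescent, mul_left_cancel hexch]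
    calc ℓ (π (ωb.eraseIdx (j - ωa.length))) ≤ (ωb.eraseIdx (j - ωa.length)).length :=
          cs.length_wordProd_le _
      _ < ωb.length := by
        rw [List.length_eraseIdx_of_lt (by simp at hj; omega)]; simp at hj; omega
      _ = ℓ (π ωb) := hωb.symm

theorem length_eq_length_mul_wordProd_add {γ : Set B} {w : W}
    (hw : ∀ i ∈ γ, cs.IsRightDescent w i) {ω : List B} (hω : cs.IsReduced ω)
    (hωγ : ∀ j ∈ ω, j ∈ γ) : ℓ w = ℓ (w * π ω) + ω.length := by
  induction ω with
  | nil => simp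
  | cons i ω ih =>
    have hω' : cs.IsReduced ω := by simpa using hω.drop 1
    have hγ : ∀ j ∈ ω, j ∈ γ := fun j hj => hωγ j (List.mem_cons_of_mem i hj)
    have hsplit := ih hω' hγ
    have hdesc : cs.IsRightDescent (w * π ω * (π ω)⁻¹) i := by
      rw [mul_inv_cancel_right]; exact hw i (hωγ i List.mem_cons_self)
    rcases isRightDescent_or_exists_of_isRightDescent_mul cs hdesc with hdesc' | ⟨a, ha, hlen⟩
    · -- a deletion inside `(π ω)⁻¹` would make `s i` a left descent of `π ω`
      exfalso
      have h₁ : ℓ (s i * π ω) < ℓ (π ω) := by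
        rwa [IsRightDescent, ← inv_simple, ← mul_inv_rev, length_inv, length_inv] at hdesc'
      have h₂ : ℓ (s i * π ω) = ω.length + 1 := by rw [← wordProd_cons, hω.eq, List.length_cons]
      have h₃ := cs.length_wordProd_le ω
      omega
    · rw [mul_inv_cancel_right] at ha
      have hw' : w * π (i :: ω) = a := by rw [wordProd_cons, ← mul_assoc, ha, inv_mul_cancel_right]
      have hle : ℓ w ≤ ℓ a + (ω.length + 1) :=
        calc ℓ w = ℓ (a * (π (i :: ω))⁻¹) := by rw [← hw', mul_inv_cancel_right]
          _ ≤ ℓ a + ℓ (π (i :: ω)) := by simpa using cs.length_mul_le a (π (i :: ω))⁻¹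
          _ = ℓ a + (ω.length + 1) := by rw [hω.eq, List.length_cons]
      rw [hw', List.length_cons]
      omega

theorem length_eq_length_mul_add_of_mem_closure {γ : Set B} {w : W}
    (hw : ∀ i ∈ γ, cs.IsRightDescent w i) {y : W} (hy : y ∈ Subgroup.closure (cs.simple '' γ)) :
    ℓ w = ℓ (w * y) + ℓ y := by
  obtain ⟨ω, hω, hωγ, rfl⟩ := exists_isReduced_of_mem_closure cs hy
  rw [hω.eq]
  exact length_eq_length_mul_wordProd_add cs hw hω hωγ

end CoxeterSystem

theorem IsLongestOf.length_pos {B W : Type*} [Group W] {M : CoxeterMatrix B}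
    {cs : CoxeterSystem M W} {γ : Set B} {r : W} (hr : IsLongestOf cs γ r) {i : B} (hi : i ∈ γ) :
    0 < cs.length r :=
  Nat.lt_of_lt_of_le Nat.one_pos (by simpa using hr.2.1 _ (Subgroup.subset_closure ⟨i, hi, rfl⟩))

theorem IsLongestOf.length_eq_length_mul_inv_add {B W : Type*} [Group W] {M : CoxeterMatrix B}
    {cs : CoxeterSystem M W} {γ : Set B} {r : W} (hr : IsLongestOf cs γ r) {w : W}
    (hw : ∀ i ∈ γ, cs.IsRightDescent w i) : cs.length w = cs.length (w * r⁻¹) + cs.length r := by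
  simpa using cs.length_eq_length_mul_add_of_mem_closure hw (inv_mem hr.1)

theorem exists_factorization_of_forall_exists_additive_factor {G : Type*} [Group G]
    (len : G → ℕ) (len_one : len 1 = 0) {R : Set G}
    (h : ∀ g ∈ Subgroup.closure R, g ≠ 1 → ∃ r ∈ R, 0 < len r ∧ len g = len (g * r⁻¹) + len r) :
    ∀ g ∈ Subgroup.closure R,
      ∃ L : List G, (∀ x ∈ L, x ∈ R) ∧ L.prod = g ∧ len g = (L.map len).sum := by
  intro g hg
  induction hn : len g using Nat.strong_induction_on generalizing g with
  | _ n ih =>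
    obtain rfl | hg1 := eq_or_ne g 1
    · exact ⟨[], by simp, by simp, by simp [← hn, len_one]⟩
    obtain ⟨r, hr, hpos, hsplit⟩ := h g hg hg1
    obtain ⟨L, hL, hprod, hlen⟩ := ih _ (by omega) (g * r⁻¹)
      (mul_mem hg (inv_mem (Subgroup.subset_closure hr))) rfl
    refine ⟨L ++ [r], ?_, by simp [hprod], by simp [← hn, ← hlen, hsplit]⟩
    simpa [or_imp, forall_and] using ⟨hL, hr⟩

theorem exists_compatible_representation_of_admissible_general {B W : Type*} [Group W]
    {M : CoxeterMatrix B} (cs : CoxeterSystem M W)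
    (α β : Set B) (hunion : α ∪ β = Set.univ)
    (rα rβ : W) (hrα : IsLongestOf cs α rα) (hrβ : IsLongestOf cs β rβ)
    (hadm : ∀ w ∈ Subgroup.closure ({rα, rβ} : Set W), ∀ γ ∈ ({α, β} : Set (Set B)),
      (∀ i ∈ γ, cs.length (w * cs.simple i) = cs.length w + 1) ∨
      (∀ i ∈ γ, cs.length (w * cs.simple i) + 1 = cs.length w)) :
    ∀ w ∈ Subgroup.closure ({rα, rβ} : Set W),
      ∃ L : List W, (∀ x ∈ L, x = rα ∨ x = rβ) ∧ L.prod = w ∧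
        cs.length w = (L.map cs.length).sum := by
  refine exists_factorization_of_forall_exists_additive_factor cs.length cs.length_one ?_
  intro w hw hw1
  obtain ⟨i, hi⟩ := cs.exists_rightDescent_of_ne_one hw1
  have factor : ∀ γ ∈ ({α, β} : Set (Set B)), ∀ r, IsLongestOf cs γ r → i ∈ γ →
      0 < cs.length r ∧ cs.length w = cs.length (w * r⁻¹) + cs.length r := by
    intro γ hγ r hr hiγ
    have hdown := (hadm w hw γ hγ).resolve_left fun hup =>
      cs.not_isRightDescent_iff.mpr (hup i hiγ) hi
    exact ⟨hr.length_pos hiγ,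
      hr.length_eq_length_mul_inv_add fun j hj => cs.isRightDescent_iff.mpr (hdown j hj)⟩
  rcases (hunion ▸ Set.mem_univ i : i ∈ α ∪ β) with hiα | hiβ
  · exact ⟨rα, by simp, factor α (by simp) rα hrα hiα⟩
  · exact ⟨rβ, by simp, factor β (by simp) rβ hrβ hiβ⟩

/-- If the spherical 2-partition `{α, β}` is admissible, then every element of
`⟨r_α, r_β⟩` admits a compatible representation on `{α, β}`. -/
theorem exists_compatible_representation_of_admissible {B W : Type*} [Group W]
    {M : CoxeterMatrix B} (cs : CoxeterSystem M W)
    (α β : Set B) (hunion : α ∪ β = Set.univ) (hdisj : Disjoint α β)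
    (hα : α.Nonempty) (hβ : β.Nonempty)
    (hsphα : IsSpherical cs α) (hsphβ : IsSpherical cs β)
    (rα rβ : W) (hrα : IsLongestOf cs α rα) (hrβ : IsLongestOf cs β rβ)
    (hadm : ∀ w ∈ Subgroup.closure ({rα, rβ} : Set W), ∀ γ ∈ ({α, β} : Set (Set B)),
      (∀ i ∈ γ, cs.length (w * cs.simple i) = cs.length w + 1) ∨
      (∀ i ∈ γ, cs.length (w * cs.simple i) + 1 = cs.length w)) :
    ∀ w ∈ Subgroup.closure ({rα, rβ} : Set W),
      ∃ L : List W, (∀ x ∈ L, x = rα ∨ x = rβ) ∧ L.prod = w ∧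
        cs.length w = (L.map cs.length).sum :=
  exists_compatible_representation_of_admissible_general cs α β hunion rα rβ hrα hrβ hadm
end

section
/- Let (W,S) be a Coxeter system indexed by I and let α, β ⊆ I be spherical subsets such that for every n ∈ ℕ the alternating product prod_n(r_α, r_β) of n factors satisfies ℓ(prod_n(r_α,r_β)) = Σ_n(ℓ(r_α),ℓ(r_β)). Then the order of r_α r_β is infinite and the parabolic subgroup W_{α∪β} is infinite. -/
/-- Alternating product `xyxy⋯` of `n` factors. -/
def altProd {W : Type*} [Monoid W] (x y : W) : ℕ → W
  | 0 => 1
  | n + 1 => x * altProd y x n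

/-- Alternating sum `a + b + a + ⋯` of `n` terms. -/
def altSum (a b : ℕ) : ℕ → ℕ
  | 0 => 0
  | n + 1 => a + altSum b a n

/-!
Since `r_α r_β` is the alternating product of `2n` factors, the hypothesis gives
`ℓ((r_α r_β)ⁿ) = n (ℓ(r_α) + ℓ(r_β))`, and `ℓ(r_α) ≥ 1` because `r_α` is at least as long as any
simple reflection of `W_α`. So the powers of `r_α r_β` have pairwise distinct lengths: they are
pairwise distinct elements of `W_{α ∪ β}`.
-/

lemma altProd_two_mul {W : Type*} [Monoid W] (x y : W) (n : ℕ) :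
    altProd x y (2 * n) = (x * y) ^ n := by
  induction n with
  | zero => simp [altProd]
  | succ n ih => rw [pow_succ', ← ih, Nat.mul_succ, altProd, altProd, mul_assoc]

lemma altSum_two_mul (a b n : ℕ) : altSum a b (2 * n) = n * (a + b) := by
  induction n with
  | zero => simp [altSum]
  | succ n ih => rw [Nat.mul_succ, altSum, altSum, ih]; ring

lemma IsLongestOf.one_le_length {B W : Type*} [Group W] {M : CoxeterMatrix B}
    {cs : CoxeterSystem M W} {α : Set B} {x : W} (hx : IsLongestOf cs α x) (hα : α.Nonempty) :
    1 ≤ cs.length x := by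
  obtain ⟨a, ha⟩ := hα
  simpa only [CoxeterSystem.length_simple] using hx.2.1 _ (Subgroup.subset_closure ⟨a, ha, rfl⟩)

lemma CoxeterSystem.injective_pow_of_length_pow_eq_mul {B W : Type*} [Group W]
    {M : CoxeterMatrix B} (cs : CoxeterSystem M W) {w : W} {c : ℕ} (hc : 0 < c)
    (hlen : ∀ n : ℕ, cs.length (w ^ n) = n * c) : Function.Injective (fun n : ℕ ↦ w ^ n) :=
  fun m n h ↦ Nat.eq_of_mul_eq_mul_right hc <| by
    rw [← hlen, ← hlen]
    exact congrArg cs.length h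

theorem infinite_of_all_altProd_compatible_general {B W : Type*} [Group W] {M : CoxeterMatrix B}
    (cs : CoxeterSystem M W)
    (α β : Set B) (hα : α.Nonempty)
    (rα rβ : W) (hrα : IsLongestOf cs α rα) (hrβ : IsLongestOf cs β rβ)
    (hcompat : ∀ n : ℕ,
      cs.length (altProd rα rβ n) = altSum (cs.length rα) (cs.length rβ) n) :
    ¬ IsOfFinOrder (rα * rβ) ∧
      Set.Infinite ((Subgroup.closure (cs.simple '' (α ∪ β)) : Subgroup W) : Set W) := by
  have hlen : ∀ n : ℕ, cs.length ((rα * rβ) ^ n) = n * (cs.length rα + cs.length rβ) := by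
    intro n
    rw [← altProd_two_mul, hcompat, altSum_two_mul]
  have hpos : 0 < cs.length rα + cs.length rβ :=
    Nat.lt_add_right _ (hrα.one_le_length hα)
  have hinj := cs.injective_pow_of_length_pow_eq_mul hpos hlen
  have hmem : rα * rβ ∈ Subgroup.closure (cs.simple '' (α ∪ β)) :=
    Subgroup.mul_mem _
      (Subgroup.closure_mono (Set.image_mono Set.subset_union_left) hrα.1)
      (Subgroup.closure_mono (Set.image_mono Set.subset_union_right) hrβ.1)
  exact ⟨injective_pow_iff_not_isOfFinOrder.mp hinj,
    Set.infinite_of_injective_forall_mem hinj fun n ↦ Subgroup.pow_mem _ hmem n⟩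

/-- If all the alternating products `∏_n(r_α, r_β)` satisfy
`ℓ(∏_n(r_α,r_β)) = Σ_n(ℓ(r_α),ℓ(r_β))`, then `r_α r_β` has infinite order and the
standard parabolic subgroup `W_{α ∪ β}` is infinite. -/
theorem infinite_of_all_altProd_compatible {B W : Type*} [Group W] {M : CoxeterMatrix B}
    (cs : CoxeterSystem M W)
    (α β : Set B) (hα : α.Nonempty) (hβ : β.Nonempty)
    (hsphα : IsSpherical cs α) (hsphβ : IsSpherical cs β)
    (rα rβ : W) (hrα : IsLongestOf cs α rα) (hrβ : IsLongestOf cs β rβ)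
    (hcompat : ∀ n : ℕ,
      cs.length (altProd rα rβ n) = altSum (cs.length rα) (cs.length rβ) n) :
    ¬ IsOfFinOrder (rα * rβ) ∧
      Set.Infinite ((Subgroup.closure (cs.simple '' (α ∪ β)) : Subgroup W) : Set W) :=
  infinite_of_all_altProd_compatible_general cs α β hα rα rβ hrα hrβ hcompat
end
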